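/- arXiv:cs/0105015 — 5 statements merged into one kernel-verified Lean document; each statement's English description precedes it below -/
import Mathlib

section
/- Régin's hyper-arc consistency characterization: the alldifferent constraint is hyper-arc consistent if and only if every edge of its value graph belongs to some matching that covers all variable nodes. Equivalently: for every i and every d ∈ D_i, there exists a solution (d_1,...,d_n) of alldifferent with d_i = d, if and only if every edge (i,d) of the value graph lies in a matching covering the variable side. -/
/-- `M` is a matching in the value graph of the domains `D`. -/
def IsValueGraphMatching {α : Type*} {n : ℕ} (D : Fin n → Finset α)
    (M : Finset (Fin n × α)) : Prop :=
  (∀ e ∈ M, e.2 ∈ D e.1) ∧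
  (∀ e ∈ M, ∀ f ∈ M, e ≠ f → e.1 ≠ f.1 ∧ e.2 ≠ f.2)

/-- `M` covers the variable side of the value graph. -/
def CoversVariables {α : Type*} {n : ℕ} (M : Finset (Fin n × α)) : Prop :=
  ∀ i : Fin n, ∃ d : α, (i, d) ∈ M

/-- Régin's characterization: `alldifferent` is hyper-arc consistent
(every value of every domain extends to a solution) iff every edge of the
value graph belongs to some matching covering all variable nodes. -/
theorem regin_hyperarc_iff_matchings {α : Type*} [DecidableEq α] {n : ℕ}
    (D : Fin n → Finset α) (hne : ∀ i, (D i).Nonempty) :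
    (∀ i : Fin n, ∀ v ∈ D i,
        ∃ d : Fin n → α, d i = v ∧ (∀ j, d j ∈ D j) ∧ Function.Injective d) ↔
      (∀ i : Fin n, ∀ v ∈ D i,
        ∃ M : Finset (Fin n × α), IsValueGraphMatching D M ∧
          CoversVariables M ∧ (i, v) ∈ M) := by
  constructor
  · intro h i v hv
    obtain ⟨d, hdi, hdom, hinj⟩ := h i v hv
    refine ⟨Finset.image (fun j => (j, d j)) Finset.univ, ⟨?_, ?_⟩, ?_, ?_⟩
    · intro e he
      simp only [Finset.mem_image, Finset.mem_univ, true_and] at he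
      obtain ⟨j, rfl⟩ := he
      exact hdom j
    · intro e he f hf hef
      simp only [Finset.mem_image, Finset.mem_univ, true_and] at he hf
      obtain ⟨j, rfl⟩ := he
      obtain ⟨k, rfl⟩ := hf
      have hjk : j ≠ k := fun h => hef (by rw [h])
      exact ⟨hjk, fun h => hjk (hinj h)⟩
    · intro j
      exact ⟨d j, Finset.mem_image.2 ⟨j, Finset.mem_univ _, rfl⟩⟩
    · rw [← hdi]
      exact Finset.mem_image.2 ⟨i, Finset.mem_univ _, rfl⟩
  · intro h i v hv
    obtain ⟨M, ⟨hdom, hmatch⟩, hcov, hiv⟩ := h i v hv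
    choose d hd using hcov
    have key : ∀ j k : Fin n, ∀ a b : α, (j, a) ∈ M → (k, b) ∈ M →
        (j = k ∨ a = b) → (j, a) = ((k, b) : Fin n × α) := by
      intro j k a b hja hkb hor
      by_contra hne'
      have := hmatch _ hja _ hkb hne'
      rcases hor with h1 | h1
      · exact this.1 h1
      · exact this.2 h1
    refine ⟨d, ?_, fun j => hdom _ (hd j), ?_⟩
    · have := key i i (d i) v (hd i) hiv (Or.inl rfl)
      exact (Prod.mk.inj this).2
    · intro j k hjk
      have := key j k (d j) (d k) (hd j) (hd k) (Or.inr hjk)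
      exact (Prod.mk.inj this).1
end

section
/- Witness for strictness of the decomposition comparison: for any n ≥ 3, in the instance with D_1 = ... = D_{n-1} = {1,...,n-1} and D_n = {1,...,n}, the decomposition into disequalities is arc consistent (no value can be pruned by any single disequality), yet every solution of alldifferent assigns x_n = n; hence all values 1,...,n-1 in D_n are not hyper-arc consistent. -/
/-- For `n ≥ 3`, the instance with `D i = {1,…,n-1}` for `i < n-1` and
`D (n-1) = {1,…,n}` is arc consistent for all the binary disequalities of the
decomposition, yet every `alldifferent` solution assigns value `n` to the last
variable; hence none of the values `1,…,n-1` of the last domain is hyper-arc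
consistent. -/
theorem decomposition_strictness_witness (n : ℕ) (hn : 3 ≤ n)
    (D : Fin n → Finset ℤ)
    (hD : ∀ i : Fin n, D i = if (i : ℕ) < n - 1 then Finset.Icc 1 ((n : ℤ) - 1)
                              else Finset.Icc 1 (n : ℤ)) :
    (∀ (i : Fin n) (v : ℤ), v ∈ D i → ∀ j : Fin n, j ≠ i → ∃ w ∈ D j, v ≠ w) ∧
    (∀ d : Fin n → ℤ, (∀ i, d i ∈ D i) → Function.Injective d →
        d ⟨n - 1, by omega⟩ = (n : ℤ)) ∧
    (∀ v ∈ Finset.Icc 1 ((n : ℤ) - 1),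
      ¬ ∃ d : Fin n → ℤ, d ⟨n - 1, by omega⟩ = v ∧ (∀ i, d i ∈ D i) ∧
          Function.Injective d) := by
  have key : ∀ d : Fin n → ℤ, (∀ i, d i ∈ D i) → Function.Injective d →
      d ⟨n - 1, by omega⟩ = (n : ℤ) := by
    intro d hd hinj
    by_contra hne
    have hall : ∀ i : Fin n, d i ∈ Finset.Icc 1 ((n : ℤ) - 1) := by
      intro i
      have := hd i
      rw [hD i] at this
      by_cases h : (i : ℕ) < n - 1
      · simpa [h] using this
      · simp only [h, if_false, Finset.mem_Icc] at this
        have hi : (i : ℕ) = n - 1 := by omega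
        have : d i ≠ (n : ℤ) := by
          have : i = ⟨n - 1, by omega⟩ := by exact Fin.ext hi
          rw [this]; exact hne
        simp only [Finset.mem_Icc]
        omega
    have hcard : (Finset.univ : Finset (Fin n)).card ≤
        (Finset.Icc 1 ((n : ℤ) - 1)).card := by
      apply Finset.card_le_card_of_injOn d (fun i _ => hall i)
      intro a _ b _ h; exact hinj h
    simp [Int.card_Icc] at hcard
    omega
  refine ⟨?_, key, ?_⟩
  · intro i v hv j hji
    have h1 : (1 : ℤ) ∈ D j := by
      rw [hD j]; split <;> simp [Finset.mem_Icc] <;> omega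
    have h2 : (2 : ℤ) ∈ D j := by
      rw [hD j]; split <;> simp [Finset.mem_Icc] <;> omega
    by_cases hv1 : v = 1
    · exact ⟨2, h2, by omega⟩
    · exact ⟨1, h1, by omega⟩
  · intro v hv ⟨d, hdv, hd, hinj⟩
    have := key d hd hinj
    rw [hdv] at this
    simp [Finset.mem_Icc] at hv
    omega
end

section
/- Puget's bound consistency characterization: the constraint alldifferent(x_1,...,x_n) with nonempty integer domains is bound consistent if and only if (1) for every integer interval I, the number of variables i with D_i ⊆ I is at most |I|, and (2) for every Hall interval I (an interval with |I| equal to the number of variables whose domain is contained in I), every variable x_i with D_i ⊄ I satisfies {min D_i, max D_i} ∩ I = ∅. -/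
/-!
An injective choice of values in the intervals `[min D_j, max D_j]` maps `K_I` injectively into
`I`, and also the variable `i` whenever its chosen bound lies in `I`; this gives (1) and (2).
Conversely, fixing `x_i` to a bound `v` replaces its interval by `{v}`. By (2) this cannot overfill
an interval `I`: either `I` was not a Hall interval, or `v ∉ I`, or `D_i ⊆ I` already. Hall's
marriage theorem then gives the assignment, because for a family of integer intervals Hall's
condition only has to be checked on intervals.
-/

/-- Bound consistency of `alldifferent` on integer domains. -/
def BoundConsistent {n : ℕ} (D : Fin n → Finset ℤ) (hne : ∀ i, (D i).Nonempty) : Prop :=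
  ∀ i : Fin n, ∀ v ∈ ({(D i).min' (hne i), (D i).max' (hne i)} : Finset ℤ),
    ∃ d : Fin n → ℤ, d i = v ∧
      (∀ j, d j ∈ Finset.Icc ((D j).min' (hne j)) ((D j).max' (hne j))) ∧
      Function.Injective d

open Finset Function

theorem Finset.subset_Icc_iff_le_min'_max'_le {α : Type*} [LinearOrder α] [LocallyFiniteOrder α]
    {s : Finset α} (hs : s.Nonempty) {a b : α} :
    s ⊆ Icc a b ↔ a ≤ s.min' hs ∧ s.max' hs ≤ b := by
  refine ⟨fun h => ⟨(mem_Icc.mp (h (s.min'_mem hs))).1, (mem_Icc.mp (h (s.max'_mem hs))).2⟩,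
    ?_⟩
  rintro ⟨ha, hb⟩ x hx
  exact mem_Icc.mpr ⟨ha.trans (s.min'_le x hx), (s.le_max' x hx).trans hb⟩

section IntervalFamily

variable {ι : Type*} (l u : ι → ℤ)

/-- Hall's condition for a family of integer intervals `[l j, u j]` only has to be checked on
intervals: if `c ∈ [min l, max u]` is covered by none of them, the family splits at `c` into two
strictly smaller families with disjoint unions. -/
theorem card_le_card_biUnion_Icc (S : Finset ι)
    (H : ∀ a b, #{j ∈ S | a ≤ l j ∧ u j ≤ b} ≤ #(Icc a b)) :
    #S ≤ #(S.biUnion fun j => Icc (l j) (u j)) := by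
  classical
  induction S using Finset.strongInduction with
  | H S ih =>
  rcases S.eq_empty_or_nonempty with rfl | hS
  · simp
  set a := S.inf' hS l
  set b := S.sup' hS u
  by_cases hgap : ∃ c ∈ Icc a b, ∀ j ∈ S, c ∉ Icc (l j) (u j)
  · obtain ⟨c, hc, hcS⟩ := hgap
    rw [mem_Icc] at hc
    have hlt_of_ge : ∀ j ∈ S, ¬ u j < c → c < l j := fun j hj hu => by
      have := hcS j hj
      rw [mem_Icc] at this
      omega
    set S₁ := {j ∈ S | u j < c}
    set S₂ := {j ∈ S | ¬ u j < c}
    have hS₁ : S₁ ⊂ S := by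
      obtain ⟨j, hj, hjb⟩ := S.exists_mem_eq_sup' hS u
      exact filter_ssubset.mpr ⟨j, hj, by omega⟩
    have hS₂ : S₂ ⊂ S := by
      obtain ⟨j, hj, hja⟩ := S.exists_mem_eq_inf' hS l
      exact filter_ssubset.mpr ⟨j, hj, fun hu => by have := hlt_of_ge j hj hu; omega⟩
    have hH : ∀ T ⊆ S, ∀ a b, #{j ∈ T | a ≤ l j ∧ u j ≤ b} ≤ #(Icc a b) :=
      fun T hT a b => (card_le_card (filter_subset_filter _ hT)).trans (H a b)
    have hdisj : Disjoint (S₁.biUnion fun j => Icc (l j) (u j))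
        (S₂.biUnion fun j => Icc (l j) (u j)) := by
      simp only [disjoint_left, mem_biUnion, mem_Icc, S₁, S₂, mem_filter]
      rintro x ⟨j, ⟨-, hj⟩, -, hxj⟩ ⟨k, ⟨hk, hk'⟩, hxk, -⟩
      have := hlt_of_ge k hk hk'
      omega
    calc #S = #S₁ + #S₂ := (card_filter_add_card_filter_not _).symm
      _ ≤ #(S₁.biUnion fun j => Icc (l j) (u j)) + #(S₂.biUnion fun j => Icc (l j) (u j)) :=
        add_le_add (ih _ hS₁ (hH _ hS₁.subset)) (ih _ hS₂ (hH _ hS₂.subset))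
      _ = #(S.biUnion fun j => Icc (l j) (u j)) := by
        rw [← card_union_of_disjoint hdisj, ← union_biUnion, filter_union_filter_not_eq]
  · push Not at hgap
    calc #S = #{j ∈ S | a ≤ l j ∧ u j ≤ b} := by
          rw [filter_true_of_mem fun j hj => ⟨S.inf'_le l hj, S.le_sup' u hj⟩]
      _ ≤ #(Icc a b) := H a b
      _ ≤ #(S.biUnion fun j => Icc (l j) (u j)) :=
        card_le_card fun c hc => mem_biUnion.mpr (hgap c hc)

variable [Fintype ι]

/-- The set `K_I` for `I = [a, b]`. -/
def indicesWithin (a b : ℤ) : Finset ι :=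
  {j | a ≤ l j ∧ u j ≤ b}

def IsHallInterval (a b : ℤ) : Prop :=
  #(Icc a b) = #(indicesWithin l u a b)

variable {l u}

theorem le_of_card_indicesWithin_le (H : ∀ a b, #(indicesWithin l u a b) ≤ #(Icc a b))
    (j : ι) :
    l j ≤ u j := by
  have hj : j ∈ indicesWithin l u (l j) (u j) := by simp [indicesWithin]
  exact nonempty_Icc.mp (card_pos.mp ((card_pos.mpr ⟨j, hj⟩).trans_le (H _ _)))

theorem exists_injective_mem_Icc (H : ∀ a b, #(indicesWithin l u a b) ≤ #(Icc a b)) :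
    ∃ f : ι → ℤ, Injective f ∧ ∀ j, f j ∈ Icc (l j) (u j) :=
  (all_card_le_biUnion_card_iff_exists_injective _).mp fun S =>
    card_le_card_biUnion_Icc l u S fun a b =>
      (card_le_card (filter_subset_filter _ (subset_univ S))).trans (H a b)

theorem card_le_card_Icc_of_injective {f : ι → ℤ} (hf : Injective f)
    (hfI : ∀ j, f j ∈ Icc (l j) (u j)) {a b : ℤ} {T : Finset ι}
    (hT : ∀ j ∈ T, j ∈ indicesWithin l u a b ∨ f j ∈ Icc a b) :
    #T ≤ #(Icc a b) := by
  refine card_le_card_of_injOn f (fun j hj => ?_) hf.injOn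
  rcases hT j hj with hj | hj
  · simp only [indicesWithin, mem_filter, mem_univ, true_and] at hj
    exact Icc_subset_Icc hj.1 hj.2 (hfI j)
  · exact hj

theorem card_indicesWithin_update_le [DecidableEq ι] {i : ι} {v a b : ℤ}
    (hle : #(indicesWithin l u a b) ≤ #(Icc a b))
    (hHall : IsHallInterval l u a b → v ∈ Icc a b → i ∈ indicesWithin l u a b) :
    #(indicesWithin (update l i v) (update u i v) a b) ≤ #(Icc a b) := by
  set K := indicesWithin l u a b
  set K' := indicesWithin (update l i v) (update u i v) a b
  have hK' : ∀ j ∈ K', j ≠ i → j ∈ K := fun j hj hji => by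
    simpa [K, K', indicesWithin, update_of_ne hji] using hj
  by_cases hiK : i ∈ K ∨ v ∉ Icc a b
  · refine (card_le_card fun j hj => ?_).trans hle
    obtain rfl | hji := eq_or_ne j i
    · refine hiK.resolve_right fun hv => hv ?_
      simpa [K', indicesWithin] using hj
    · exact hK' j hj hji
  · push Not at hiK
    have hlt : #K < #(Icc a b) := hle.lt_of_ne fun h => hiK.1 (hHall h.symm hiK.2)
    calc #K' ≤ #(insert i K) := card_le_card fun j hj => by
          obtain rfl | hji := eq_or_ne j i
          · exact mem_insert_self _ _
          · exact mem_insert_of_mem (hK' j hj hji)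
      _ ≤ #K + 1 := card_insert_le _ _
      _ ≤ #(Icc a b) := hlt

theorem exists_injective_mem_Icc_update [DecidableEq ι] {i : ι} {v : ℤ}
    (hv : v ∈ Icc (l i) (u i))
    (H : ∀ a b, #(indicesWithin (update l i v) (update u i v) a b) ≤ #(Icc a b)) :
    ∃ d : ι → ℤ, d i = v ∧ (∀ j, d j ∈ Icc (l j) (u j)) ∧ Injective d := by
  obtain ⟨d, hd, hdI⟩ := exists_injective_mem_Icc H
  have hdi : d i = v := by simpa using hdI i
  refine ⟨d, hdi, fun j => ?_, hd⟩
  obtain rfl | hji := eq_or_ne j i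
  · exact hdi ▸ hv
  · simpa [update_of_ne hji] using hdI j

variable (l u) in
theorem exists_injective_through_bounds_iff :
    (∀ i, ∀ v ∈ ({l i, u i} : Finset ℤ),
        ∃ d : ι → ℤ, d i = v ∧ (∀ j, d j ∈ Icc (l j) (u j)) ∧ Injective d) ↔
      (∀ a b, #(indicesWithin l u a b) ≤ #(Icc a b)) ∧
        ∀ a b, IsHallInterval l u a b →
          ∀ i ∉ indicesWithin l u a b, ({l i, u i} : Finset ℤ) ∩ Icc a b = ∅ := by
  classical
  constructor
  · intro hBC
    refine ⟨fun a b => ?_, fun a b hHall i hi => ?_⟩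
    · cases isEmpty_or_nonempty ι
      · simp [indicesWithin, univ_eq_empty]
      · obtain ⟨d, -, hdI, hd⟩ := hBC (Classical.arbitrary ι) _ (mem_insert_self _ _)
        exact card_le_card_Icc_of_injective hd hdI fun j hj => .inl hj
    · refine eq_empty_iff_forall_notMem.mpr fun x hx => ?_
      obtain ⟨hxlu, hxab⟩ := mem_inter.mp hx
      obtain ⟨d, hdi, hdI, hd⟩ := hBC i x hxlu
      have := card_le_card_Icc_of_injective hd hdI (T := insert i (indicesWithin l u a b))
        fun j hj => (mem_insert.mp hj).elim (fun h => .inr (h ▸ hdi ▸ hxab)) .inl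
      rw [card_insert_of_notMem hi, ← hHall] at this
      omega
  · rintro ⟨hle, hHall⟩ i v hv
    have hlu := le_of_card_indicesWithin_le hle i
    refine exists_injective_mem_Icc_update ?_ fun a b => card_indicesWithin_update_le (hle a b)
      fun hab hvab => by_contra fun hi => ?_
    · simp only [mem_insert, mem_singleton] at hv
      rcases hv with rfl | rfl <;> simpa using hlu
    · exact (eq_empty_iff_forall_notMem.mp (hHall a b hab i hi)) v (mem_inter.mpr ⟨hv, hvab⟩)

end IntervalFamily

/-- Puget's characterization of bound consistency: `alldifferent` is bound
consistent iff (1) for every integer interval `I = [a,b]`, the number of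
variables whose domain is contained in `I` is at most `|I|`, and (2) for every
Hall interval `I`, no variable whose domain is not contained in `I` has its
minimum or maximum in `I`. -/
theorem puget_bound_consistency {n : ℕ} (D : Fin n → Finset ℤ)
    (hne : ∀ i, (D i).Nonempty) :
    BoundConsistent D hne ↔
      ((∀ a b : ℤ,
          (Finset.univ.filter (fun i : Fin n => D i ⊆ Finset.Icc a b)).card ≤
            (Finset.Icc a b).card) ∧
       (∀ a b : ℤ,
          (Finset.Icc a b).card =
            (Finset.univ.filter (fun i : Fin n => D i ⊆ Finset.Icc a b)).card →
          ∀ i : Fin n, ¬ D i ⊆ Finset.Icc a b →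
            ({(D i).min' (hne i), (D i).max' (hne i)} : Finset ℤ) ∩
              Finset.Icc a b = ∅)) := by
  have hK : ∀ a b, indicesWithin (fun j => (D j).min' (hne j)) (fun j => (D j).max' (hne j)) a b
      = ({i | D i ⊆ Icc a b} : Finset (Fin n)) :=
    fun a b => filter_congr fun j _ => (subset_Icc_iff_le_min'_max'_le (hne j)).symm
  simpa only [BoundConsistent, IsHallInterval, hK, mem_filter, mem_univ, true_and] using
    exists_injective_through_bounds_iff (fun j => (D j).min' (hne j)) (fun j => (D j).max' (hne j))
end

section
/- Leconte's range consistency characterization: the constraint alldifferent(x_1,...,x_n) with nonempty integer domains is range consistent if and only if for every Hall set K ⊆ {1,...,n} (a set of variables with |K| = |I_K|, where I_K = [min ⋃_{i∈K} D_i, max ⋃_{i∈K} D_i]), every variable x_i with i ∉ K satisfies D_i ∩ I_K = ∅. -/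
/-- Range consistency of `alldifferent` on integer domains. -/
def RangeConsistent {n : ℕ} (D : Fin n → Finset ℤ) (hne : ∀ i, (D i).Nonempty) : Prop :=
  ∀ i : Fin n, ∀ v ∈ D i, ∃ d : Fin n → ℤ, d i = v ∧
    (∀ j, d j ∈ Finset.Icc ((D j).min' (hne j)) ((D j).max' (hne j))) ∧
    Function.Injective d

/-- The interval `I_K = [min ⋃_{i∈K} D i, max ⋃_{i∈K} D i]` of a nonempty set
of variables `K`. -/
noncomputable def IntervalOf {n : ℕ} (D : Fin n → Finset ℤ) (hne : ∀ i, (D i).Nonempty)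
    (K : Finset (Fin n)) (hK : K.Nonempty) : Finset ℤ :=
  have h : (K.biUnion D).Nonempty :=
    hK.elim fun i hi => (hne i).elim fun v hv =>
      ⟨v, Finset.mem_biUnion.mpr ⟨i, hi, hv⟩⟩
  Finset.Icc ((K.biUnion D).min' h) ((K.biUnion D).max' h)

/-!
A value `v ∈ D i` lying in `I_K` for a Hall set `K ∌ i` cannot be extended: `K ∪ {i}` would
need `|K| + 1` distinct values in `I_K`. Conversely, pin `x_i := v` and relax every other domain to
its hull; by Hall's marriage theorem it suffices that every subfamily has at least as many
values as variables, and for a family of intervals only subfamilies whose union `J` is an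
interval matter. Removing `i` from such a subfamily leaves a set `K` with `I_K ⊆ J`; removing
variables one at a time shows `|K| ≤ |I_K|` always, and `|K| = |J|` would make `K` a Hall set
with `v ∈ D i ∩ I_K`.
-/

open Finset

section OrdConnected

variable {α ι : Type*} [LinearOrder α]

theorem Set.OrdConnected.forall_lt_or_forall_gt {s : Set α} (hs : s.OrdConnected) {g : α}
    (hg : g ∉ s) : (∀ z ∈ s, z < g) ∨ ∀ z ∈ s, g < z := by
  by_contra! h
  obtain ⟨⟨a, ha, hga⟩, ⟨b, hb, hbg⟩⟩ := h
  exact hg (hs.out hb ha ⟨hbg, hga⟩)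

theorem Finset.Icc_subset_of_ordConnected [LocallyFiniteOrder α] {s : Finset α}
    (hs : (s : Set α).OrdConnected) {a b : α} (ha : a ∈ s) (hb : b ∈ s) : Icc a b ⊆ s := by
  rw [← coe_subset, coe_Icc]
  exact hs.out ha hb

/-- A union with a gap `g` splits, at `g`, into the unions of two smaller subfamilies, which
are disjoint. -/
theorem Finset.card_le_card_biUnion_of_ordConnected (E : ι → Finset α)
    (hE : ∀ j, (E j : Set α).OrdConnected)
    (h : ∀ T : Finset ι, (T.biUnion E : Set α).OrdConnected → #T ≤ #(T.biUnion E))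
    (S : Finset ι) : #S ≤ #(S.biUnion E) := by
  classical
  induction S using Finset.strongInduction with
  | _ S ih =>
  by_cases hS : (S.biUnion E : Set α).OrdConnected
  · exact h S hS
  rw [Set.ordConnected_def] at hS
  push Not at hS
  obtain ⟨x, hx, y, hy, hxy⟩ := hS
  obtain ⟨g, ⟨hxg, hgy⟩, hg⟩ := Set.not_subset.mp hxy
  obtain ⟨jx, hjx, hxE⟩ := mem_biUnion.mp hx
  obtain ⟨jy, hjy, hyE⟩ := mem_biUnion.mp hy
  have hgE : ∀ j ∈ S, g ∉ E j := fun j hj hgj => hg (mem_biUnion.mpr ⟨j, hj, hgj⟩)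
  have hxg : x < g := lt_of_le_of_ne hxg (by rintro rfl; exact hg hx)
  have hgy : g < y := lt_of_le_of_ne hgy (by rintro rfl; exact hg hy)
  set P : ι → Prop := fun j => ∀ z ∈ E j, z < g
  have hright : ∀ j ∈ S, ¬P j → ∀ z ∈ E j, g < z := fun j hj hj' =>
    ((hE j).forall_lt_or_forall_gt (hgE j hj)).resolve_left hj'
  have hjxP : P jx := ((hE jx).forall_lt_or_forall_gt (hgE jx hjx)).resolve_right
    fun h => (h x hxE).not_gt hxg
  have hjyP : ¬P jy := fun h => (h y hyE).not_gt hgy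
  have hleft := ih _ (filter_ssubset.mpr ⟨jy, hjy, hjyP⟩)
  have hright' := ih _ ((filter_ssubset (p := (¬P ·))).mpr ⟨jx, hjx, not_not_intro hjxP⟩)
  have hdisj : Disjoint ((S.filter P).biUnion E) ((S.filter (¬P ·)).biUnion E) := by
    simp only [disjoint_left, mem_biUnion, mem_filter]
    rintro z ⟨j, ⟨-, hj⟩, hz⟩ ⟨k, ⟨hk, hk'⟩, hz'⟩
    exact (hj z hz).not_gt (hright k hk hk' z hz')
  calc #S = #(S.filter P) + #(S.filter (¬P ·)) := (card_filter_add_card_filter_not P).symm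
    _ ≤ #((S.filter P).biUnion E) + #((S.filter (¬P ·)).biUnion E) := add_le_add hleft hright'
    _ = #(S.biUnion E) := by
      rw [← card_union_of_disjoint hdisj, ← union_biUnion, filter_union_filter_not_eq]

end OrdConnected

section Leconte

variable {n : ℕ} (D : Fin n → Finset ℤ) (hne : ∀ i, (D i).Nonempty)

def HallIntervalsAvoided : Prop :=
  ∀ (K : Finset (Fin n)) (hK : K.Nonempty), #K = #(IntervalOf D hne K hK) →
    ∀ i : Fin n, i ∉ K → D i ∩ IntervalOf D hne K hK = ∅

variable {D hne}

theorem ordConnected_intervalOf (K : Finset (Fin n)) (hK : K.Nonempty) :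
    (IntervalOf D hne K hK : Set ℤ).OrdConnected := by
  rw [IntervalOf, coe_Icc]
  exact Set.ordConnected_Icc

theorem biUnion_subset_intervalOf (K : Finset (Fin n)) (hK : K.Nonempty) :
    K.biUnion D ⊆ IntervalOf D hne K hK := fun _ hx =>
  mem_Icc.mpr ⟨min'_le _ _ hx, le_max' _ _ hx⟩

theorem intervalOf_subset {K : Finset (Fin n)} (hK : K.Nonempty) {U : Finset ℤ}
    (hU : (U : Set ℤ).OrdConnected) (hKU : K.biUnion D ⊆ U) : IntervalOf D hne K hK ⊆ U :=
  Icc_subset_of_ordConnected hU (hKU (min'_mem _ _)) (hKU (max'_mem _ _))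

theorem intervalOf_mono {K K' : Finset (Fin n)} (hK : K.Nonempty) (hK' : K'.Nonempty)
    (h : K ⊆ K') : IntervalOf D hne K hK ⊆ IntervalOf D hne K' hK' :=
  intervalOf_subset hK (ordConnected_intervalOf K' hK')
    ((biUnion_subset_biUnion_of_subset_left D h).trans (biUnion_subset_intervalOf K' hK'))

theorem Icc_min'_max'_subset_intervalOf {K : Finset (Fin n)} (hK : K.Nonempty) {j : Fin n}
    (hj : j ∈ K) : Icc ((D j).min' (hne j)) ((D j).max' (hne j)) ⊆ IntervalOf D hne K hK :=
  have hD := (subset_biUnion_of_mem D hj).trans (biUnion_subset_intervalOf K hK)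
  Icc_subset_of_ordConnected (ordConnected_intervalOf K hK) (hD (min'_mem _ _))
    (hD (max'_mem _ _))

theorem RangeConsistent.hallIntervalsAvoided (h : RangeConsistent D hne) :
    HallIntervalsAvoided D hne := by
  intro K hK hHall i hi
  refine eq_empty_of_forall_notMem fun v hv => ?_
  obtain ⟨hvD, hvI⟩ := mem_inter.mp hv
  obtain ⟨d, hdi, hdD, hd⟩ := h i v hvD
  have hmaps : Set.MapsTo d (insert i K : Finset (Fin n)) (IntervalOf D hne K hK) := by
    intro j hj
    rcases mem_insert.mp (mem_coe.mp hj) with rfl | hjK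
    · exact hdi ▸ hvI
    · exact Icc_min'_max'_subset_intervalOf hK hjK (hdD j)
  have := card_le_card_of_injOn d hmaps hd.injOn
  rw [card_insert_of_notMem hi] at this
  omega

theorem HallIntervalsAvoided.card_lt_card_of_intervalOf_subset (h : HallIntervalsAvoided D hne)
    {K : Finset (Fin n)} (hK : K.Nonempty) (hKI : #K ≤ #(IntervalOf D hne K hK)) {i : Fin n}
    (hi : i ∉ K) {v : ℤ} (hv : v ∈ D i) {J : Finset ℤ} (hIJ : IntervalOf D hne K hK ⊆ J)
    (hvJ : v ∈ J) : #K < #J := by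
  by_contra! hJK
  have hJ : IntervalOf D hne K hK = J := eq_of_subset_of_card_le hIJ (hJK.trans hKI)
  have hHall : #K = #(IntervalOf D hne K hK) := le_antisymm hKI (hJ ▸ hJK)
  have hempty := h K hK hHall i hi
  rw [hJ] at hempty
  exact eq_empty_iff_forall_notMem.mp hempty v (mem_inter.mpr ⟨hv, hvJ⟩)

theorem HallIntervalsAvoided.card_le_card_intervalOf (h : HallIntervalsAvoided D hne)
    (K : Finset (Fin n)) (hK : K.Nonempty) : #K ≤ #(IntervalOf D hne K hK) := by
  classical
  induction K using Finset.strongInduction with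
  | _ K ih =>
  obtain ⟨j, hj⟩ := hK
  have hjI : (D j).min' (hne j) ∈ IntervalOf D hne K ⟨j, hj⟩ :=
    biUnion_subset_intervalOf K _ (mem_biUnion.mpr ⟨j, hj, min'_mem _ _⟩)
  suffices #(K.erase j) < #(IntervalOf D hne K ⟨j, hj⟩) by
    rw [← card_erase_add_one hj]; omega
  rcases (K.erase j).eq_empty_or_nonempty with hK' | hK'
  · rw [hK', card_empty]
    exact card_pos.mpr ⟨_, hjI⟩
  · exact h.card_lt_card_of_intervalOf_subset hK' (ih _ (erase_ssubset hj) hK')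
      (notMem_erase j K) (min'_mem _ _) (intervalOf_mono hK' _ (erase_subset j K)) hjI

variable (D hne) in
noncomputable def pinnedIntervals (i : Fin n) (v : ℤ) : Fin n → Finset ℤ :=
  Function.update (fun j => Icc ((D j).min' (hne j)) ((D j).max' (hne j))) i {v}

theorem ordConnected_pinnedIntervals (i : Fin n) (v : ℤ) (j : Fin n) :
    (pinnedIntervals D hne i v j : Set ℤ).OrdConnected := by
  rcases eq_or_ne j i with rfl | hj
  · simp [pinnedIntervals, Set.ordConnected_singleton]
  · simp [pinnedIntervals, hj, Set.ordConnected_Icc]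

theorem HallIntervalsAvoided.card_le_card_biUnion_pinnedIntervals
    (h : HallIntervalsAvoided D hne) {i : Fin n} {v : ℤ} (hv : v ∈ D i) (T : Finset (Fin n))
    (hU : (T.biUnion (pinnedIntervals D hne i v) : Set ℤ).OrdConnected) :
    #T ≤ #(T.biUnion (pinnedIntervals D hne i v)) := by
  classical
  set U := T.biUnion (pinnedIntervals D hne i v)
  have hDU : (T.erase i).biUnion D ⊆ U := by
    intro x hx
    obtain ⟨j, hj, hxj⟩ := mem_biUnion.mp hx
    refine mem_biUnion.mpr ⟨j, mem_of_mem_erase hj, ?_⟩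
    simp only [pinnedIntervals, Function.update_of_ne (ne_of_mem_erase hj)]
    exact mem_Icc.mpr ⟨min'_le _ _ hxj, le_max' _ _ hxj⟩
  by_cases hi : i ∈ T
  · have hvU : v ∈ U := mem_biUnion.mpr ⟨i, hi, by simp [pinnedIntervals]⟩
    suffices #(T.erase i) < #U by rw [← card_erase_add_one hi]; omega
    rcases (T.erase i).eq_empty_or_nonempty with hT' | hT'
    · rw [hT', card_empty]
      exact card_pos.mpr ⟨v, hvU⟩
    · exact h.card_lt_card_of_intervalOf_subset hT' (h.card_le_card_intervalOf _ hT')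
        (notMem_erase i T) hv (intervalOf_subset hT' hU hDU) hvU
  · rw [erase_eq_of_notMem hi] at hDU
    rcases T.eq_empty_or_nonempty with rfl | hT
    · simp
    · exact (h.card_le_card_intervalOf T hT).trans (card_le_card (intervalOf_subset hT hU hDU))

theorem HallIntervalsAvoided.rangeConsistent (h : HallIntervalsAvoided D hne) :
    RangeConsistent D hne := by
  intro i v hv
  obtain ⟨d, hd, hdE⟩ := (all_card_le_biUnion_card_iff_exists_injective _).mp
    (card_le_card_biUnion_of_ordConnected _ (ordConnected_pinnedIntervals i v)
      (h.card_le_card_biUnion_pinnedIntervals hv))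
  have hdi : d i = v := by simpa [pinnedIntervals] using hdE i
  refine ⟨d, hdi, fun j => ?_, hd⟩
  rcases eq_or_ne j i with rfl | hj
  · rw [hdi]
    exact mem_Icc.mpr ⟨min'_le _ _ hv, le_max' _ _ hv⟩
  · simpa [pinnedIntervals, hj] using hdE j

end Leconte

/-- Leconte's characterization of range consistency: `alldifferent` is range
consistent iff for every Hall set `K` (a nonempty set of variables with
`|K| = |I_K|`), every variable outside `K` has a domain disjoint from `I_K`. -/
theorem leconte_range_consistency {n : ℕ} (D : Fin n → Finset ℤ)
    (hne : ∀ i, (D i).Nonempty) :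
    RangeConsistent D hne ↔
      (∀ (K : Finset (Fin n)) (hK : K.Nonempty),
        K.card = (IntervalOf D hne K hK).card →
        ∀ i : Fin n, i ∉ K → D i ∩ IntervalOf D hne K hK = ∅) :=
  ⟨RangeConsistent.hallIntervalsAvoided, HallIntervalsAvoided.rangeConsistent⟩
end

section
/- Pruning soundness for Hall intervals: let I be a Hall interval for alldifferent(x_1,...,x_n) (i.e. |I| = |{i : D_i ⊆ I}|). Then in every solution (d_1,...,d_n) of alldifferent, for every i with D_i ⊄ I we have d_i ∉ I. Consequently, removing the values of I from the domains of all variables not in K_I preserves the solution set. -/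
/-- Pruning soundness for Hall intervals: if `I = [a,b]` is a Hall interval
(`|I| = |{i : D i ⊆ I}|`), then in every solution of `alldifferent`, every
variable whose domain is not contained in `I` takes a value outside `I`;
hence removing the values of `I` from those domains preserves the solution
set. -/
theorem hall_interval_pruning {n : ℕ} (D : Fin n → Finset ℤ)
    (hne : ∀ i, (D i).Nonempty) (a b : ℤ)
    (hHall : (Finset.Icc a b).card =
        (Finset.univ.filter (fun i : Fin n => D i ⊆ Finset.Icc a b)).card) :
    (∀ d : Fin n → ℤ, (∀ i, d i ∈ D i) → Function.Injective d →
        ∀ i : Fin n, ¬ D i ⊆ Finset.Icc a b → d i ∉ Finset.Icc a b) ∧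
    (∀ d : Fin n → ℤ,
      ((∀ i, d i ∈ D i) ∧ Function.Injective d) ↔
      ((∀ i, d i ∈ (if D i ⊆ Finset.Icc a b then D i
                    else D i \ Finset.Icc a b)) ∧ Function.Injective d)) := by
  have key : ∀ d : Fin n → ℤ, (∀ i, d i ∈ D i) → Function.Injective d →
      ∀ i : Fin n, ¬ D i ⊆ Finset.Icc a b → d i ∉ Finset.Icc a b := by
    intro d hd hinj i hi hmem
    set K := Finset.univ.filter (fun i : Fin n => D i ⊆ Finset.Icc a b) with hK
    have hsub : K.image d ⊆ Finset.Icc a b := by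
      intro x hx
      obtain ⟨j, hj, rfl⟩ := Finset.mem_image.mp hx
      exact (Finset.mem_filter.mp hj).2 (hd j)
    have hcard : K.card = (K.image d).card :=
      (Finset.card_image_of_injective K hinj).symm
    have heq : K.image d = Finset.Icc a b :=
      Finset.eq_of_subset_of_card_le hsub (by omega)
    have : d i ∈ K.image d := heq ▸ hmem
    obtain ⟨j, hj, hji⟩ := Finset.mem_image.mp this
    have : j = i := hinj hji
    subst this
    exact hi (Finset.mem_filter.mp hj).2
  refine ⟨key, fun d => ⟨fun ⟨hd, hinj⟩ => ⟨fun i => ?_, hinj⟩,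
    fun ⟨hd, hinj⟩ => ⟨fun i => ?_, hinj⟩⟩⟩
  · by_cases h : D i ⊆ Finset.Icc a b
    · simpa [h] using hd i
    · simp only [h, if_false, Finset.mem_sdiff]
      exact ⟨hd i, key d hd hinj i h⟩
  · by_cases h : D i ⊆ Finset.Icc a b
    · simpa [h] using hd i
    · have := hd i
      simp only [h, if_false, Finset.mem_sdiff] at this
      exact this.1
end
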